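/- With σ, τ, i_max, j, τ' as above, let S = {τ(i) : i ≤ i_max} be the prefix set at position i_max (which equals {σ(i) : i ≤ i_max} because σ and τ agree at all positions strictly greater than i_max). Then the effective commonality of the moved element satisfies W_{τ'}(i_max) = Σ_{e ∈ S, e ≠ τ(j)} w(τ(j), e), and if σ is greedy then W_{τ'}(i_max) ≤ W_τ(i_max). -/

import Mathlib

/-- Effective commonality of position `i` in ordering `σ`:
`W_σ(i) = ∑_{j < i} w(σ i, σ j)`. -/
noncomputable def effComm {E : Type*} {n : ℕ} (w : E → E → ℝ) (σ : Fin n ≃ E)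
    (i : Fin n) : ℝ :=
  ∑ j ∈ Finset.Iio i, w (σ i) (σ j)

/-- Commonality index of ordering `σ`: the maximum effective commonality
over all positions (equal to `0` when `n = 0`). -/
noncomputable def commIdx {E : Type*} {n : ℕ} (w : E → E → ℝ) (σ : Fin n ≃ E) : ℝ :=
  ⨆ i : Fin n, effComm w σ i

/-- `σ` is a greedy ordering: for every position `i` and every element `e` of
the prefix set `S_i = {σ j : j ≤ i}`, we have
`W_σ(i) ≤ ∑_{e' ∈ S_i, e' ≠ e} w(e, e')`. -/
def Greedy {E : Type*} {n : ℕ} [DecidableEq E] (w : E → E → ℝ) (σ : Fin n ≃ E) : Prop :=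
  ∀ i : Fin n, ∀ e ∈ (Finset.Iic i).image σ,
    effComm w σ i ≤ ∑ e' ∈ ((Finset.Iic i).image σ).erase e, w e e'

/-!
The moved element `τ j = σ imax` sits at position `imax` of `τ'` behind exactly the other
elements of the common prefix set `S`, which gives the formula; the same sum is `W_σ(imax)`.
Since `τ imax ∈ S`, greediness of `σ` at `imax` with `e = τ imax` bounds it by
`∑_{e ∈ S, e ≠ τ imax} w(τ imax, e) = W_τ(imax)`.
-/

open Finset

section Prefix

variable {E : Type*} [DecidableEq E] {n : ℕ}

theorem Equiv.mem_finset_image_iff {α : Type*} (ρ : α ≃ E) (s : Finset α) (e : E) :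
    e ∈ s.image ρ ↔ ρ.symm e ∈ s := by
  simp [← Equiv.eq_symm_apply]

theorem image_Iic_eq_of_eq_of_lt {σ τ : Fin n ≃ E} {i : Fin n}
    (h : ∀ k, i < k → σ k = τ k) : (Iic i).image σ = (Iic i).image τ := by
  have key : ∀ {σ τ : Fin n ≃ E}, (∀ k, i < k → σ k = τ k) →
      ∀ e, σ.symm e ≤ i → τ.symm e ≤ i := by
    intro σ τ h e he
    by_contra! hlt
    have : τ.symm e = σ.symm e := σ.injective (by simp [h _ hlt])
    exact absurd he (this ▸ hlt).not_ge
  ext e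
  simp only [Equiv.mem_finset_image_iff, mem_Iic]
  exact ⟨key h e, key (fun k hk => (h k hk).symm) e⟩

theorem image_Iic_erase_self (ρ : Fin n ≃ E) (i : Fin n) :
    ((Iic i).image ρ).erase (ρ i) = (Iio i).image ρ := by
  rw [← image_erase ρ.injective, Iic_erase]

theorem effComm_eq_sum_image (w : E → E → ℝ) (ρ : Fin n ≃ E) (i : Fin n) :
    effComm w ρ i = ∑ e ∈ (Iio i).image ρ, w (ρ i) e :=
  (sum_image fun _ _ _ _ h => ρ.injective h).symm

theorem effComm_eq_sum_erase (w : E → E → ℝ) (ρ : Fin n ≃ E) (i : Fin n) :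
    effComm w ρ i = ∑ e ∈ ((Iic i).image ρ).erase (ρ i), w (ρ i) e := by
  rw [image_Iic_erase_self, effComm_eq_sum_image]

theorem Greedy.effComm_le {w : E → E → ℝ} {σ τ : Fin n ≃ E} (hσ : Greedy w σ) {i : Fin n}
    (hS : (Iic i).image σ = (Iic i).image τ) : effComm w σ i ≤ effComm w τ i := by
  have hmem : τ i ∈ (Iic i).image σ := hS ▸ mem_image_of_mem τ (mem_Iic.mpr le_rfl)
  calc effComm w σ i ≤ ∑ e ∈ ((Iic i).image σ).erase (τ i), w (τ i) e := hσ i (τ i) hmem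
    _ = effComm w τ i := by rw [hS, effComm_eq_sum_erase]

theorem image_Iio_eq_erase_of_exchange {τ τ' : Fin n ≃ E} {j imax : Fin n} (hjlt : j < imax)
    (hτ'_lo : ∀ i : Fin n, i < j → τ' i = τ i)
    (hτ'_mid : ∀ i : Fin n, j ≤ i → ∀ h2 : i < imax,
      τ' i = τ ⟨(i : ℕ) + 1, Nat.lt_of_le_of_lt (Nat.succ_le_of_lt (Fin.lt_def.mp h2)) imax.isLt⟩) :
    (Iio imax).image τ' = ((Iic imax).image τ).erase (τ j) := by
  rw [← image_erase τ.injective]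
  refine eq_of_subset_of_card_le ?_ ?_
  · intro e he
    obtain ⟨i, hi, rfl⟩ := mem_image.mp he
    rw [mem_Iio] at hi
    rcases lt_or_ge i j with hij | hji
    · rw [hτ'_lo i hij]
      exact mem_image_of_mem τ (mem_erase.mpr ⟨hij.ne, mem_Iic.mpr hi.le⟩)
    · rw [hτ'_mid i hji hi]
      refine mem_image_of_mem τ (mem_erase.mpr ⟨?_, mem_Iic.mpr ?_⟩)
      · exact ne_of_gt (Fin.lt_def.mpr (Nat.lt_succ_of_le hji))
      · exact Fin.le_def.mpr (Nat.succ_le_of_lt hi)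
  · rw [card_image_of_injective _ τ.injective, card_image_of_injective _ τ'.injective,
      card_erase_of_mem (mem_Iic.mpr hjlt.le), Fin.card_Iic, Fin.card_Iio, Nat.add_sub_cancel]

end Prefix

theorem effComm_exchange_moved_general
    {E : Type*} [DecidableEq E] {n : ℕ} (w : E → E → ℝ)
    (σ τ τ' : Fin n ≃ E)
    (imax j : Fin n)
    (himax_max : ∀ i : Fin n, imax < i → σ i = τ i)
    (hj : τ j = σ imax)
    (hjlt : j < imax)
    (hτ'_lo : ∀ i : Fin n, i < j → τ' i = τ i)
    (hτ'_mid : ∀ i : Fin n, j ≤ i → ∀ h2 : i < imax,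
      τ' i = τ ⟨(i : ℕ) + 1, Nat.lt_of_le_of_lt (Nat.succ_le_of_lt (Fin.lt_def.mp h2)) imax.isLt⟩)
    (hτ'_imax : τ' imax = τ j) :
    effComm w τ' imax =
        ∑ e ∈ ((Finset.Iic imax).image τ).erase (τ j), w (τ j) e
      ∧ (Greedy w σ → effComm w τ' imax ≤ effComm w τ imax) := by
  have hS : (Iic imax).image σ = (Iic imax).image τ := image_Iic_eq_of_eq_of_lt himax_max
  have hmoved : effComm w τ' imax = ∑ e ∈ ((Iic imax).image τ).erase (τ j), w (τ j) e := by
    rw [effComm_eq_sum_image, image_Iio_eq_erase_of_exchange hjlt hτ'_lo hτ'_mid, hτ'_imax]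
  refine ⟨hmoved, fun hσ => ?_⟩
  calc effComm w τ' imax = effComm w σ imax := by rw [hmoved, effComm_eq_sum_erase, hS, hj]
    _ ≤ effComm w τ imax := hσ.effComm_le hS

/-- Let `S = {τ i : i ≤ imax}` be the prefix set at position `imax`. Then the
effective commonality of the moved element satisfies
`W_{τ'}(imax) = ∑_{e ∈ S, e ≠ τ j} w(τ j, e)`, and if `σ` is greedy then
`W_{τ'}(imax) ≤ W_τ(imax)`. -/
theorem effComm_exchange_moved
    {E : Type*} [DecidableEq E] {n : ℕ} (w : E → E → ℝ)
    (hw : ∀ e e', 0 ≤ w e e')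
    (σ τ τ' : Fin n ≃ E) (hne : σ ≠ τ)
    (imax j : Fin n)
    (himax_ne : σ imax ≠ τ imax)
    (himax_max : ∀ i : Fin n, imax < i → σ i = τ i)
    (hj : τ j = σ imax)
    (hjlt : j < imax)
    (hτ'_lo : ∀ i : Fin n, i < j → τ' i = τ i)
    (hτ'_hi : ∀ i : Fin n, imax < i → τ' i = τ i)
    (hτ'_mid : ∀ i : Fin n, j ≤ i → ∀ h2 : i < imax,
      τ' i = τ ⟨(i : ℕ) + 1, Nat.lt_of_le_of_lt (Nat.succ_le_of_lt (Fin.lt_def.mp h2)) imax.isLt⟩)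
    (hτ'_imax : τ' imax = τ j) :
    effComm w τ' imax =
        ∑ e ∈ ((Finset.Iic imax).image τ).erase (τ j), w (τ j) e
      ∧ (Greedy w σ → effComm w τ' imax ≤ effComm w τ imax) :=
  effComm_exchange_moved_general w σ τ τ' imax j himax_max hj hjlt hτ'_lo hτ'_mid hτ'_imax
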